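/- Let Z be an element of the MacNeille completion N(A*) of A* (realized as closed upper sets, i.e., Z = Z^∇Δ) with Z non-empty. If Z = XY for final segments X, Y of A*, then X and Y are also closed upper sets (X = X^∇Δ and Y = Y^∇Δ) and non-empty; consequently the monoid N°(A*) of non-empty closed upper sets is free. -/

import Mathlib

/-- The Higman (subword) ordering on words over an ordered alphabet `A`. -/
def Hig {A : Type*} [PartialOrder A] (u v : List A) : Prop :=
  List.SublistForall₂ (· ≤ ·) u v

/-- Elementwise concatenation of languages. -/
def conc {A : Type*} (X Y : Set (List A)) : Set (List A) :=
  Set.image2 (· ++ ·) X Y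

/-- A final segment (upward closed set) of `A*` for the Higman ordering. -/
def IsFinal {A : Type*} [PartialOrder A] (F : Set (List A)) : Prop :=
  ∀ ⦃a b : List A⦄, Hig a b → a ∈ F → b ∈ F

/-- Upward closure of a set of words. -/
def upset {A : Type*} [PartialOrder A] (X : Set (List A)) : Set (List A) :=
  {b | ∃ a ∈ X, Hig a b}

/-- The set of minimal elements of a set of words. -/
def minSet {A : Type*} [PartialOrder A] (X : Set (List A)) : Set (List A) :=
  {x | x ∈ X ∧ ∀ y ∈ X, Hig y x → y = x}

/-- An antichain of words for the Higman ordering. -/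
def IsAnti {A : Type*} [PartialOrder A] (U : Set (List A)) : Prop :=
  ∀ x ∈ U, ∀ y ∈ U, x ≠ y → ¬ Hig x y

/-- The upper cone of a set `X`: words above every element of `X`. -/
def upCone {A : Type*} [PartialOrder A] (X : Set (List A)) : Set (List A) :=
  {w | ∀ x ∈ X, Hig x w}

/-- The lower cone of a set `X`: words below every element of `X`. -/
def downCone {A : Type*} [PartialOrder A] (X : Set (List A)) : Set (List A) :=
  {w | ∀ x ∈ X, Hig w x}

/-- Closed upper sets: members of the MacNeille completion `N(A*)` of `A*`. -/
def IsClosedUpper {A : Type*} [PartialOrder A] (Z : Set (List A)) : Prop :=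
  Z = upCone (downCone Z)

/-- An irreducible member of the monoid `N°(A*)` of non-empty closed upper sets. -/
def IrredClosed {A : Type*} [PartialOrder A] (Z : Set (List A)) : Prop :=
  Z ≠ Set.univ ∧
    ∀ X Y : Set (List A), IsClosedUpper X → IsClosedUpper Y →
      Z = conc X Y → Z = X ∨ Z = Y

/-!
Closedness passes from `XY` to its factors because a lower bound `d` of `XY`, cut after its
shortest prefix whose suffix lies below a fixed `y ∈ Y`, leaves a lower bound of `X`; hence
`X^∇Δ · y ⊆ (XY)^∇Δ = XY`, and a shortest `y` can be cancelled. Freeness is Levi's criterion: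
non-empty final segments cancel on both sides and are equidivisible, and the least length of a
word is an additive grading vanishing only on `A*`.
-/

open List Set

section Higman

variable {A : Type*} [PartialOrder A]

theorem Hig.of_sublist {u v : List A} (h : u <+ v) : Hig u v := h.sublistForall₂

theorem Hig.refl (u : List A) : Hig u u := .of_sublist (Sublist.refl u)

theorem Hig.nil (u : List A) : Hig [] u := .of_sublist (nil_sublist u)

theorem Hig.trans {u v w : List A} (h₁ : Hig u v) (h₂ : Hig v w) : Hig u w :=
  IsTrans.trans (r := SublistForall₂ (· ≤ ·)) _ _ _ h₁ h₂

theorem Hig.append {u₁ u₂ v₁ v₂ : List A} (h₁ : Hig u₁ v₁) (h₂ : Hig u₂ v₂) :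
    Hig (u₁ ++ u₂) (v₁ ++ v₂) := by
  obtain ⟨l₁, f₁, s₁⟩ := sublistForall₂_iff.1 h₁
  obtain ⟨l₂, f₂, s₂⟩ := sublistForall₂_iff.1 h₂
  exact sublistForall₂_iff.2 ⟨l₁ ++ l₂, rel_append f₁ f₂, s₁.append s₂⟩

theorem hig_append_iff {l r₁ r₂ : List A} :
    Hig l (r₁ ++ r₂) ↔ ∃ l₁ l₂, l = l₁ ++ l₂ ∧ Hig l₁ r₁ ∧ Hig l₂ r₂ := by
  refine ⟨fun h => ?_, fun ⟨l₁, l₂, hl, h₁, h₂⟩ => hl ▸ h₁.append h₂⟩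
  induction r₁ generalizing l with
  | nil => exact ⟨[], l, rfl, .nil [], h⟩
  | cons a r₁ ih =>
    cases h with
    | nil => exact ⟨[], [], rfl, .nil _, .nil _⟩
    | cons hba h =>
      obtain ⟨l₁, l₂, rfl, h₁, h₂⟩ := ih h
      exact ⟨_ :: l₁, l₂, rfl, .cons hba h₁, h₂⟩
    | cons_right h =>
      obtain ⟨l₁, l₂, rfl, h₁, h₂⟩ := ih h
      exact ⟨l₁, l₂, rfl, .cons_right h₁, h₂⟩

theorem append_hig_iff {l₁ l₂ r : List A} :
    Hig (l₁ ++ l₂) r ↔ ∃ r₁ r₂, r = r₁ ++ r₂ ∧ Hig l₁ r₁ ∧ Hig l₂ r₂ := by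
  refine ⟨fun h => ?_, fun ⟨r₁, r₂, hr, h₁, h₂⟩ => hr ▸ h₁.append h₂⟩
  induction r generalizing l₁ with
  | nil =>
    obtain ⟨l, f, s⟩ := sublistForall₂_iff.1 h
    rw [sublist_nil.1 s, forall₂_nil_right_iff, append_eq_nil_iff] at f
    obtain ⟨rfl, rfl⟩ := f
    exact ⟨[], [], rfl, .nil [], .nil []⟩
  | cons b r ih =>
    cases l₁ with
    | nil => exact ⟨[], b :: r, rfl, .nil _, h⟩
    | cons a l₁ =>
      cases h with
      | cons hab h =>
        obtain ⟨r₁, r₂, rfl, h₁, h₂⟩ := ih h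
        exact ⟨b :: r₁, r₂, rfl, .cons hab h₁, h₂⟩
      | cons_right h =>
        obtain ⟨r₁, r₂, rfl, h₁, h₂⟩ := ih h
        exact ⟨b :: r₁, r₂, rfl, .cons_right h₁, h₂⟩

end Higman

section Concatenation

variable {A : Type*}

theorem append_mem_conc {X Y : Set (List A)} {x y : List A} (hx : x ∈ X) (hy : y ∈ Y) :
    x ++ y ∈ conc X Y :=
  mem_image2_of_mem hx hy

theorem conc_assoc (X Y Z : Set (List A)) : conc (conc X Y) Z = conc X (conc Y Z) :=
  image2_assoc append_assoc

/-- Takes the junk value `0` on the empty language. -/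
noncomputable def minLen (X : Set (List A)) : ℕ := sInf (length '' X)

theorem minLen_le {X : Set (List A)} {x : List A} (hx : x ∈ X) : minLen X ≤ x.length :=
  Nat.sInf_le (mem_image_of_mem _ hx)

theorem exists_length_eq_minLen {X : Set (List A)} (hX : X.Nonempty) :
    ∃ x ∈ X, x.length = minLen X :=
  Nat.sInf_mem (hX.image _)

theorem minLen_conc {X Y : Set (List A)} (hX : X.Nonempty) (hY : Y.Nonempty) :
    minLen (conc X Y) = minLen X + minLen Y := by
  refine le_antisymm ?_ ?_
  · obtain ⟨x, hx, hxl⟩ := exists_length_eq_minLen hX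
    obtain ⟨y, hy, hyl⟩ := exists_length_eq_minLen hY
    simpa [hxl, hyl] using minLen_le (append_mem_conc hx hy)
  · have hne : (conc X Y).Nonempty := hX.image2 hY
    obtain ⟨z, hz, hzl⟩ := exists_length_eq_minLen hne
    obtain ⟨x, hx, y, hy, rfl⟩ := hz
    rw [← hzl, length_append]
    exact add_le_add (minLen_le hx) (minLen_le hy)

end Concatenation

section FinalSegments

variable {A : Type*} [PartialOrder A]

theorem isFinal_conc {X Y : Set (List A)} (hX : IsFinal X) (hY : IsFinal Y) :
    IsFinal (conc X Y) := by
  rintro _ b hb ⟨x, hx, y, hy, rfl⟩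
  obtain ⟨b₁, b₂, rfl, h₁, h₂⟩ := append_hig_iff.1 hb
  exact append_mem_conc (hX h₁ hx) (hY h₂ hy)

theorem conc_univ {X : Set (List A)} (hX : IsFinal X) : conc X univ = X :=
  subset_antisymm (image2_subset_iff.2 fun x hx y _ => hX (.of_sublist (sublist_append_left x y)) hx)
    fun x hx => ⟨x, hx, [], trivial, append_nil x⟩

theorem univ_conc {Y : Set (List A)} (hY : IsFinal Y) : conc univ Y = Y :=
  subset_antisymm (image2_subset_iff.2 fun x _ y hy => hY (.of_sublist (sublist_append_right x y)) hy)
    fun y hy => ⟨[], trivial, y, hy, rfl⟩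

theorem foldr_conc_eq_conc (l : List (Set (List A))) {Y : Set (List A)} (hY : IsFinal Y) :
    l.foldr conc Y = conc (l.foldr conc univ) Y := by
  induction l with
  | nil => exact (univ_conc hY).symm
  | cons X l ih => rw [foldr_cons, foldr_cons, ih, conc_assoc]

theorem IsFinal.conc_ne_univ {X : Set (List A)} (hX : IsFinal X) (hXU : X ≠ univ)
    (Y : Set (List A)) : conc X Y ≠ univ := by
  intro h
  obtain ⟨x, hx, y, -, hxy⟩ : [] ∈ conc X Y := h ▸ mem_univ _
  rw [(append_eq_nil_iff.1 hxy).1] at hx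
  exact hXU (eq_univ_of_forall fun w => hX (.nil w) hx)

theorem upCone_isFinal (S : Set (List A)) : IsFinal (upCone S) :=
  fun _ _ hab ha s hs => (ha s hs).trans hab

theorem IsClosedUpper.isFinal {Z : Set (List A)} (hZ : IsClosedUpper Z) : IsFinal Z :=
  hZ ▸ upCone_isFinal _

theorem subset_upCone_downCone (X : Set (List A)) : X ⊆ upCone (downCone X) :=
  fun x hx _ hd => hd x hx

theorem IsFinal.minLen_pos {X : Set (List A)} (hX : IsFinal X) (hne : X.Nonempty)
    (hXU : X ≠ univ) : 0 < minLen X := by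
  refine Nat.pos_of_ne_zero fun h => hXU (eq_univ_of_forall fun w => ?_)
  obtain ⟨x, hx, hxl⟩ := exists_length_eq_minLen hne
  rw [h, length_eq_zero_iff] at hxl
  exact hX (.nil w) (hxl ▸ hx)

theorem mem_of_append_mem_conc_left {X Y : Set (List A)} (hX : IsFinal X) {u y : List A}
    (hyl : y.length ≤ minLen Y) (h : u ++ y ∈ conc X Y) : u ∈ X := by
  obtain ⟨x, hx, y', hy', hxy⟩ := h
  have hxu : x <+: u := prefix_of_prefix_length_le ⟨y', hxy ▸ rfl⟩ ⟨y, rfl⟩ <| by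
    have := congrArg length hxy
    simp only [length_append] at this
    linarith [minLen_le hy']
  exact hX (.of_sublist hxu.sublist) hx

theorem mem_of_append_mem_conc_right {X Y : Set (List A)} (hY : IsFinal Y) {x v : List A}
    (hxl : x.length ≤ minLen X) (h : x ++ v ∈ conc X Y) : v ∈ Y := by
  obtain ⟨x', hx', y, hy, hxy⟩ := h
  have hyv : y <:+ v := suffix_of_suffix_length_le ⟨x', hxy ▸ rfl⟩ ⟨x, rfl⟩ <| by
    have := congrArg length hxy
    simp only [length_append] at this
    linarith [minLen_le hx']
  exact hY (.of_sublist hyv.sublist) hy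

theorem conc_right_cancel {X X' Y : Set (List A)} (hX : IsFinal X) (hX' : IsFinal X')
    (hY : Y.Nonempty) (h : conc X Y = conc X' Y) : X = X' := by
  obtain ⟨y, hy, hyl⟩ := exists_length_eq_minLen hY
  ext u
  exact ⟨fun hu => mem_of_append_mem_conc_left hX' hyl.le (h ▸ append_mem_conc hu hy),
    fun hu => mem_of_append_mem_conc_left hX hyl.le (h ▸ append_mem_conc hu hy)⟩

theorem conc_left_cancel {X Y Y' : Set (List A)} (hY : IsFinal Y) (hY' : IsFinal Y')
    (hX : X.Nonempty) (h : conc X Y = conc X Y') : Y = Y' := by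
  obtain ⟨x, hx, hxl⟩ := exists_length_eq_minLen hX
  ext v
  exact ⟨fun hv => mem_of_append_mem_conc_right hY' hxl.le (h ▸ append_mem_conc hx hv),
    fun hv => mem_of_append_mem_conc_right hY hxl.le (h ▸ append_mem_conc hx hv)⟩

end FinalSegments

section Closure

variable {A : Type*} [PartialOrder A]

theorem append_mem_of_mem_upCone_downCone_left {X Y : Set (List A)}
    (hZ : IsClosedUpper (conc X Y)) {w y : List A} (hw : w ∈ upCone (downCone X)) (hy : y ∈ Y) :
    w ++ y ∈ conc X Y := by
  rw [hZ]
  intro d hd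
  let P : Set (List A) := {d₁ | ∃ d₂, d₁ ++ d₂ = d ∧ Hig d₂ y}
  obtain ⟨d₁, ⟨d₂, rfl, hd₂⟩, hd₁⟩ :=
    exists_length_eq_minLen (⟨d, [], append_nil d, .nil y⟩ : P.Nonempty)
  refine (hw d₁ fun x hx => ?_).append hd₂
  obtain ⟨e₁, e₂, he, he₁, he₂⟩ := hig_append_iff.1 (hd _ (append_mem_conc hx hy))
  have : d₁ <+: e₁ := prefix_of_prefix_length_le ⟨d₂, rfl⟩ ⟨e₂, he.symm⟩
    (hd₁ ▸ minLen_le ⟨e₂, he.symm, he₂⟩)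
  exact (Hig.of_sublist this.sublist).trans he₁

theorem append_mem_of_mem_upCone_downCone_right {X Y : Set (List A)}
    (hZ : IsClosedUpper (conc X Y)) {x w : List A} (hx : x ∈ X) (hw : w ∈ upCone (downCone Y)) :
    x ++ w ∈ conc X Y := by
  rw [hZ]
  intro d hd
  let P : Set (List A) := {d₂ | ∃ d₁, d₁ ++ d₂ = d ∧ Hig d₁ x}
  obtain ⟨d₂, ⟨d₁, rfl, hd₁⟩, hd₂⟩ :=
    exists_length_eq_minLen (⟨d, [], nil_append d, .nil x⟩ : P.Nonempty)
  refine hd₁.append (hw d₂ fun y hy => ?_)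
  obtain ⟨e₁, e₂, he, he₁, he₂⟩ := hig_append_iff.1 (hd _ (append_mem_conc hx hy))
  have : d₂ <:+ e₂ := suffix_of_suffix_length_le ⟨d₁, rfl⟩ ⟨e₁, he.symm⟩
    (hd₂ ▸ minLen_le ⟨e₁, he.symm, he₁⟩)
  exact (Hig.of_sublist this.sublist).trans he₂

theorem IsClosedUpper.of_conc_left {X Y : Set (List A)} (hZ : IsClosedUpper (conc X Y))
    (hne : (conc X Y).Nonempty) (hX : IsFinal X) : IsClosedUpper X := by
  obtain ⟨y, hy, hyl⟩ := exists_length_eq_minLen hne.of_image2_right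
  refine (subset_upCone_downCone X).antisymm fun w hw => ?_
  exact mem_of_append_mem_conc_left hX hyl.le (append_mem_of_mem_upCone_downCone_left hZ hw hy)

theorem IsClosedUpper.of_conc_right {X Y : Set (List A)} (hZ : IsClosedUpper (conc X Y))
    (hne : (conc X Y).Nonempty) (hY : IsFinal Y) : IsClosedUpper Y := by
  obtain ⟨x, hx, hxl⟩ := exists_length_eq_minLen hne.of_image2_left
  refine (subset_upCone_downCone Y).antisymm fun w hw => ?_
  exact mem_of_append_mem_conc_right hY hxl.le (append_mem_of_mem_upCone_downCone_right hZ hx hw)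

end Closure

section Factorization

variable {A : Type*} [PartialOrder A]

/-- Levi's equidivisibility property. -/
theorem exists_conc_eq_of_conc_eq_conc {X₁ X₂ Y₁ Y₂ : Set (List A)} (hX₁ : IsFinal X₁)
    (hX₂ : IsFinal X₂) (hY₁ : IsFinal Y₁) (hX₁ne : X₁.Nonempty) (hY₂ne : Y₂.Nonempty)
    (h : conc X₁ X₂ = conc Y₁ Y₂) (hle : minLen X₁ ≤ minLen Y₁) :
    ∃ W, IsFinal W ∧ Y₁ = conc X₁ W ∧ X₂ = conc W Y₂ := by
  obtain ⟨u, hu, hul⟩ := exists_length_eq_minLen hX₁ne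
  let W : Set (List A) := {w | ∀ s ∈ Y₂, w ++ s ∈ X₂}
  have hW : IsFinal W := fun _ _ hab ha s hs => hX₂ (hab.append (.refl s)) (ha s hs)
  have hX₂W : X₂ = conc W Y₂ := by
    refine subset_antisymm (fun v hv => ?_) fun _ ⟨w, hw, s, hs, hws⟩ => hws ▸ hw s hs
    obtain ⟨t, ht, s, hs, hts⟩ : u ++ v ∈ conc Y₁ Y₂ := h ▸ append_mem_conc hu hv
    obtain ⟨c, rfl⟩ : u <+: t :=
      prefix_of_prefix_length_le ⟨v, rfl⟩ ⟨s, hts⟩ (hul ▸ hle.trans (minLen_le ht))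
    refine ⟨c, fun s' hs' => mem_of_append_mem_conc_right hX₂ hul.le ?_, s, hs, ?_⟩
    · rw [← append_assoc, h]
      exact append_mem_conc ht hs'
    · simpa using hts
  refine ⟨W, hW, conc_right_cancel hY₁ (isFinal_conc hX₁ hW) hY₂ne ?_, hX₂W⟩
  rw [conc_assoc, ← hX₂W, h]

theorem IrredClosed.eq_of_conc_eq_conc {G H R S : Set (List A)} (hGc : IsClosedUpper G)
    (hHc : IsClosedUpper H) (hG : IrredClosed G) (hH : IrredClosed H) (hR : IsFinal R)
    (hS : IsFinal S) (hZ : IsClosedUpper (conc G R)) (hne : (conc G R).Nonempty)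
    (h : conc G R = conc H S) : G = H := by
  wlog hle : minLen G ≤ minLen H generalizing G H R S
  · exact (this hHc hGc hH hG hS hR (h ▸ hZ) (h ▸ hne) h.symm (le_of_not_ge hle)).symm
  have hne' : (conc H S).Nonempty := h ▸ hne
  obtain ⟨W, hW, rfl, -⟩ := exists_conc_eq_of_conc_eq_conc hGc.isFinal hR hHc.isFinal
    hne.of_image2_left hne'.of_image2_right h hle
  have hGW : (conc G W).Nonempty := hne'.of_image2_left
  rcases hH.2 G W hGc (hHc.of_conc_right hGW hW) rfl with hHG | hHW
  · exact hHG.symm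
  · -- `G W = W` forces `minLen G = 0`, i.e. `G = A*`
    have := minLen_conc hGW.of_image2_left hGW.of_image2_right
    rw [hHW] at this
    have := hGc.isFinal.minLen_pos hGW.of_image2_left hG.1
    omega

def IsIrredFactorization (l : List (Set (List A))) (Z : Set (List A)) : Prop :=
  (∀ G ∈ l, IsClosedUpper G ∧ G.Nonempty ∧ IrredClosed G) ∧ l.foldr conc univ = Z

theorem IsIrredFactorization.append {l₁ l₂ : List (Set (List A))} {X Y : Set (List A)}
    (h₁ : IsIrredFactorization l₁ X) (h₂ : IsIrredFactorization l₂ Y) (hY : IsFinal Y) :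
    IsIrredFactorization (l₁ ++ l₂) (conc X Y) := by
  refine ⟨fun G hG => (mem_append.1 hG).elim (h₁.1 G) (h₂.1 G), ?_⟩
  rw [foldr_append, h₂.2, foldr_conc_eq_conc l₁ hY, h₁.2]

theorem exists_isIrredFactorization {Z : Set (List A)} (hZ : IsClosedUpper Z)
    (hne : Z.Nonempty) : ∃ l, IsIrredFactorization l Z := by
  by_cases hU : Z = univ
  · exact ⟨[], fun _ h => absurd h not_mem_nil, hU.symm⟩
  by_cases hI : IrredClosed Z
  · refine ⟨[Z], fun G hG => ?_, conc_univ hZ.isFinal⟩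
    rw [mem_singleton.1 hG]
    exact ⟨hZ, hne, hI⟩
  obtain ⟨X, Y, hX, hY, rfl, hZX, hZY⟩ : ∃ X Y, IsClosedUpper X ∧ IsClosedUpper Y ∧
      Z = conc X Y ∧ Z ≠ X ∧ Z ≠ Y := by
    simpa [IrredClosed, hU] using hI
  have hXU : X ≠ univ := fun h => hZY (by rw [h, univ_conc hY.isFinal])
  have hYU : Y ≠ univ := fun h => hZX (by rw [h, conc_univ hX.isFinal])
  have hlen := minLen_conc hne.of_image2_left hne.of_image2_right
  have := hX.isFinal.minLen_pos hne.of_image2_left hXU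
  have := hY.isFinal.minLen_pos hne.of_image2_right hYU
  obtain ⟨lX, hlX⟩ := exists_isIrredFactorization hX hne.of_image2_left
  obtain ⟨lY, hlY⟩ := exists_isIrredFactorization hY hne.of_image2_right
  exact ⟨lX ++ lY, hlX.append hlY hY.isFinal⟩
termination_by minLen Z

theorem IsIrredFactorization.tail {G : Set (List A)} {l : List (Set (List A))}
    {Z : Set (List A)} (h : IsIrredFactorization (G :: l) Z) :
    IsIrredFactorization l (l.foldr conc univ) :=
  ⟨fun H hH => h.1 H (mem_cons_of_mem G hH), rfl⟩

theorem IsIrredFactorization.isFinal {l : List (Set (List A))} {Z : Set (List A)}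
    (h : IsIrredFactorization l Z) : IsFinal Z := by
  induction l generalizing Z with
  | nil => exact h.2 ▸ fun _ _ _ _ => trivial
  | cons G l ih => exact h.2 ▸ isFinal_conc (h.1 G mem_cons_self).1.isFinal (ih h.tail)

theorem IsIrredFactorization.unique {l₁ l₂ : List (Set (List A))} {Z : Set (List A)}
    (hZ : IsClosedUpper Z) (hne : Z.Nonempty) (h₁ : IsIrredFactorization l₁ Z)
    (h₂ : IsIrredFactorization l₂ Z) : l₁ = l₂ := by
  induction l₁ generalizing l₂ Z with
  | nil =>
    cases l₂ with
    | nil => rfl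
    | cons H k =>
      obtain ⟨hHc, -, hH⟩ := h₂.1 H mem_cons_self
      exact absurd (h₂.2.trans h₁.2.symm) (hHc.isFinal.conc_ne_univ hH.1 _)
  | cons G r ih =>
    obtain ⟨hGc, -, hG⟩ := h₁.1 G mem_cons_self
    cases l₂ with
    | nil => exact absurd (h₁.2.trans h₂.2.symm) (hGc.isFinal.conc_ne_univ hG.1 _)
    | cons H k =>
      obtain ⟨hHc, -, hH⟩ := h₂.1 H mem_cons_self
      have hGR : Z = conc G (r.foldr conc univ) := h₁.2.symm
      have hHS : conc G (r.foldr conc univ) = conc H (k.foldr conc univ) := h₁.2.trans h₂.2.symm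
      subst hGR
      obtain rfl := hG.eq_of_conc_eq_conc hGc hHc hH h₁.tail.isFinal h₂.tail.isFinal hZ hne hHS
      have hRS := conc_left_cancel h₁.tail.isFinal h₂.tail.isFinal hne.of_image2_left hHS
      rw [ih (hZ.of_conc_right hne h₁.tail.isFinal) hne.of_image2_right h₁.tail (hRS ▸ h₂.tail)]

end Factorization

theorem stmt19 {A : Type*} [PartialOrder A] :
    (∀ Z X Y : Set (List A), IsClosedUpper Z → Z.Nonempty →
      IsFinal X → IsFinal Y → Z = conc X Y →
      IsClosedUpper X ∧ IsClosedUpper Y ∧ X.Nonempty ∧ Y.Nonempty) ∧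
    (∀ Z : Set (List A), IsClosedUpper Z → Z.Nonempty →
      ∃! l : List (Set (List A)),
        (∀ G ∈ l, IsClosedUpper G ∧ G.Nonempty ∧ IrredClosed G) ∧
        l.foldr conc Set.univ = Z) := by
  refine ⟨fun Z X Y hZ hne hX hY hZXY => ?_, fun Z hZ hne => ?_⟩
  · subst hZXY
    exact ⟨hZ.of_conc_left hne hX, hZ.of_conc_right hne hY, hne.of_image2_left,
      hne.of_image2_right⟩
  · obtain ⟨l, hl⟩ := exists_isIrredFactorization hZ hne
    exact ⟨l, hl, fun l' hl' => IsIrredFactorization.unique hZ hne hl' hl⟩
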